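/- On the unrestricted strict preference domain 𝒫 (all linear orders on O) with n ≥ 3 agents, the mechanism that, at each profile, assigns every agent involved in a cycle in the first step of TTC his top-choice object and assigns every other agent his own endowment, is locally unanimous but not strategy-proof. -/
import Mathlib


/- Housing market model (Shapley–Scarf). Agents and objects are identified:
the type `I` is the (finite) set of agents, and object `i` (the endowment of
agent `i`) is identified with `i` itself. A strict preference is a linear
order on `I` (viewed as the set of objects); a preference domain is a set of
linear orders; a mechanism maps preference profiles to assignments `I → I`
(an allocation being a bijective assignment). -/

open Finset

variable {I : Type*} [DecidableEq I]

/-- The most preferred object of `S` under the linear order `p`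
(`d` is a junk default, used only when `S = ∅`). -/
def favIn (p : LinearOrder I) (S : Finset I) (d : I) : I :=
  if h : S.Nonempty then @Finset.max' I p S h else d

/-- The top choice of preference `p` (`d` is a junk default, used only if `I` is empty). -/
def topOf [Fintype I] (p : LinearOrder I) (d : I) : I := favIn p Finset.univ d

/-- The agents of `S` lying on a cycle of the pointing map `fun i => fav i S`
(each agent points to the owner of his favorite remaining object; a cycle
closes within at most `S.card` steps). -/
def cyclicAgents (fav : I → Finset I → I) (S : Finset I) : Finset I :=
  S.filter fun i => ∃ k ∈ Finset.range S.card, (fun j => fav j S)^[k + 1] i = i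

lemma cyclicAgents_subset (fav : I → Finset I → I) (S : Finset I) :
    cyclicAgents fav S ⊆ S := Finset.filter_subset _ _

/-- The TTC procedure on the set `S` of remaining agents: every agent of `S`
lying on a pointing cycle receives the object owned by the agent he points to
and is removed; the procedure is then repeated on the remaining agents.
(Agents outside `S` keep their endowments; when the pointing map sends `S`
into `S` — as is always the case for pointing maps induced by preferences —
there always is a cycle, so the degenerate `else` branch is never reached.) -/
def TTCaux (fav : I → Finset I → I) (S : Finset I) : I → I :=
  if hC : (cyclicAgents fav S).Nonempty then fun i =>
    if i ∈ cyclicAgents fav S then fav i S else TTCaux fav (S \ cyclicAgents fav S) i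
  else id
termination_by S.card
decreasing_by
  exact Finset.card_lt_card (Finset.sdiff_ssubset (cyclicAgents_subset fav S) hC)

/-- The Top Trading Cycles mechanism. -/
def TTC [Fintype I] (P : I → LinearOrder I) : I → I :=
  TTCaux (fun i S => favIn (P i) S i) Finset.univ

section Axioms

variable [Fintype I]

/-- `ψ` is locally unanimous on the domain `D`: whenever some nonempty set `J`
of agents admits a unanimously best suballocation `μ` (a bijection of `J` onto
its endowment set `O_J = J` giving every member his top choice), `ψ` implements `μ` on `J`. -/
def LocallyUnanimous (D : Set (LinearOrder I)) (ψ : (I → LinearOrder I) → I → I) : Prop :=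
  ∀ P : I → LinearOrder I, (∀ i, P i ∈ D) →
    ∀ J : Finset I, J.Nonempty → ∀ μ : I → I, Set.BijOn μ ↑J ↑J →
      (∀ i ∈ J, μ i = topOf (P i) i) → ∀ i ∈ J, ψ P i = μ i

/-- Strategy-proofness of `ψ` on the domain `D`. -/
def StrategyProof (D : Set (LinearOrder I)) (ψ : (I → LinearOrder I) → I → I) : Prop :=
  ∀ P : I → LinearOrder I, (∀ i, P i ∈ D) → ∀ i : I, ∀ q ∈ D,
    ¬ (P i).lt (ψ P i) (ψ (Function.update P i q) i)

/-- Group strategy-proofness of `ψ` on the domain `D`. -/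
def GroupStrategyProof (D : Set (LinearOrder I)) (ψ : (I → LinearOrder I) → I → I) : Prop :=
  ∀ P P' : I → LinearOrder I, (∀ i, P i ∈ D) → (∀ i, P' i ∈ D) →
    ∀ J : Finset I, J.Nonempty → (∀ i ∉ J, P' i = P i) →
    ¬ ((∀ i ∈ J, (P i).le (ψ P i) (ψ P' i)) ∧ ∃ j ∈ J, (P j).lt (ψ P j) (ψ P' j))

/-- Individual rationality of `ψ` on the domain `D` (agent `i`'s endowment is `i`). -/
def IndividuallyRational (D : Set (LinearOrder I)) (ψ : (I → LinearOrder I) → I → I) : Prop :=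
  ∀ P : I → LinearOrder I, (∀ i, P i ∈ D) → ∀ i : I, (P i).le i (ψ P i)

/-- Top-one Richness of the domain `D`. -/
def TopOneRich (D : Set (LinearOrder I)) : Prop :=
  ∀ o : I, ∃ p ∈ D, topOf p o = o

/-- Top-two Richness of the domain `D`: any two distinct objects can be
reported as the top two choices, in either order. -/
def TopTwoRich (D : Set (LinearOrder I)) : Prop :=
  ∀ o o' : I, o ≠ o' → ∃ p ∈ D, topOf p o = o ∧ ∀ x : I, x ≠ o → p.le x o'

/-- `J` forms a cycle of the pointing map `f`: `J` is nonempty, closed under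
`f`, and every member is reachable from every member by iterating `f`. -/
def IsCycleIn (f : I → I) (J : Finset I) : Prop :=
  J.Nonempty ∧ (∀ i ∈ J, f i ∈ J) ∧ ∀ i ∈ J, ∀ j ∈ J, ∃ k : ℕ, f^[k] i = j

end Axioms

/-- The mechanism that assigns every agent involved in a cycle in the first
step of TTC his top-choice object and every other agent his own endowment.
(In the first step every agent points at the owner of his top choice, i.e. the
pointing map is `fun j => topOf (P j) j`; the agents involved in cycles are
exactly the periodic points of this map, and a cycle closes within at most
`Fintype.card I` steps.) -/
def firstStepMech {I : Type*} [DecidableEq I] [Fintype I]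
    (P : I → LinearOrder I) : I → I := fun i =>
  if ∃ k ∈ Finset.range (Fintype.card I), (fun j => topOf (P j) j)^[k + 1] i = i then
    topOf (P i) i
  else i
section Aux

variable {I : Type*} [DecidableEq I]

lemma topOf_lift' [Fintype I] (g : I → ℕ) (hg : Function.Injective g) (d o : I)
    (hI : 0 < Fintype.card I) (h : ∀ i, g i ≤ g o) :
    topOf (LinearOrder.lift' g hg) d = o := by
  have hne : (Finset.univ : Finset I).Nonempty :=
    Finset.univ_nonempty_iff.mpr (Fintype.card_pos_iff.mp hI)
  letI : LinearOrder I := LinearOrder.lift' g hg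
  unfold topOf favIn
  rw [dif_pos hne]
  apply le_antisymm
  · exact Finset.max'_le _ _ _ (fun i _ => show g i ≤ g o from h i)
  · exact Finset.le_max' _ o (Finset.mem_univ o)

lemma lt_lift' (g : I → ℕ) (hg : Function.Injective g) (x y : I) (h : g x < g y) :
    (LinearOrder.lift' g hg).lt x y := by
  letI := LinearOrder.lift' g hg
  exact lt_iff_le_not_ge.mpr ⟨show g x ≤ g y from h.le, fun hc => absurd (show g y ≤ g x from hc) (not_le.mpr h)⟩

lemma exists_period {J : Finset I} (f : I → I) (hmaps : ∀ j ∈ J, f j ∈ J)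
    (hinj : Set.InjOn f ↑J) {i : I} (hi : i ∈ J) :
    ∃ m, 1 ≤ m ∧ m ≤ J.card ∧ f^[m] i = i := by
  have horb : ∀ k, f^[k] i ∈ J := by
    intro k
    induction k with
    | zero => simpa using hi
    | succ k ih => rw [Function.iterate_succ_apply']; exact hmaps _ ih
  -- pigeonhole on range (J.card + 1)
  have hcard : J.card < (Finset.range (J.card + 1)).card := by simp
  obtain ⟨a, ha, b, hb, hab, heq⟩ :=
    Finset.exists_ne_map_eq_of_card_lt_of_maps_to hcard
      (fun k _ => horb k : ∀ k ∈ Finset.range (J.card + 1), f^[k] i ∈ J)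
  -- wlog a < b
  wlog hlt : a < b generalizing a b
  · exact this b hb a ha hab.symm heq.symm (hab.lt_or_gt.resolve_left hlt)
  have hcancel : ∀ (k : ℕ) (x y : I), (∀ n, f^[n] x ∈ J) → (∀ n, f^[n] y ∈ J) →
      f^[k] x = f^[k] y → x = y := by
    intro k
    induction k with
    | zero => intro x y _ _ h; simpa using h
    | succ k ih =>
      intro x y hx hy h
      apply ih x y hx hy
      apply hinj (hx k) (hy k)
      rw [← Function.iterate_succ_apply' f k x, ← Function.iterate_succ_apply' f k y]
      exact h
  refine ⟨b - a, by omega, by simp at hb; omega, ?_⟩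
  apply hcancel a (f^[b - a] i) i
    (fun n => by rw [← Function.iterate_add_apply]; exact horb _) horb
  rw [← Function.iterate_add_apply]
  have : a + (b - a) = b := by omega
  rw [this, ← heq]

end Aux

/-- On the unrestricted strict preference domain (all linear
orders) with at least three agents, the mechanism that assigns every agent
involved in a cycle in the first step of TTC his top choice and every other
agent his endowment is locally unanimous but not strategy-proof. -/
theorem stmt_16 {I : Type*} [DecidableEq I] [Fintype I] (hn : 3 ≤ Fintype.card I) :
    LocallyUnanimous (Set.univ : Set (LinearOrder I)) (firstStepMech) ∧
      ¬ StrategyProof (Set.univ : Set (LinearOrder I)) (firstStepMech) := by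
  constructor
  · -- locally unanimous
    intro P _ J hJ μ hμ htop i hi
    have hfe : ∀ j ∈ J, topOf (P j) j = μ j := fun j hj => (htop j hj).symm
    have hmaps : ∀ j ∈ J, (fun j => topOf (P j) j) j ∈ J := fun j hj => by
      simp only; rw [hfe j hj]; exact hμ.mapsTo hj
    have hinj : Set.InjOn (fun j => topOf (P j) j) ↑J := fun x hx y hy hxy => by
      apply hμ.injOn hx hy
      rw [← hfe x hx, ← hfe y hy]; exact hxy
    obtain ⟨m, hm1, hm2, hm3⟩ := exists_period _ hmaps hinj hi
    have hcard := Finset.card_le_univ J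
    unfold firstStepMech
    rw [if_pos, htop i hi]
    refine ⟨m - 1, Finset.mem_range.mpr (by omega), ?_⟩
    have hmm : m - 1 + 1 = m := by omega
    rw [hmm]; exact hm3
  · -- not strategy-proof
    intro hSP
    set n := Fintype.card I with hn'
    have hpos : 0 < n := by omega
    obtain ⟨a⟩ : Nonempty I := Fintype.card_pos_iff.mp hpos
    have : Nontrivial I := Fintype.one_lt_card_iff_nontrivial.mp (by omega)
    obtain ⟨b, hba⟩ := exists_ne a
    obtain ⟨c, hc⟩ : ∃ c, c ∉ ({a, b} : Finset I) := by
      by_contra h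
      push_neg at h
      have hsub : (Finset.univ : Finset I) ⊆ {a, b} := fun x _ => h x
      have := Finset.card_le_card hsub
      have h2 : ({a, b} : Finset I).card ≤ 2 := Finset.card_insert_le _ _ |>.trans (by simp)
      simp only [Finset.card_univ] at this
      omega
    simp only [Finset.mem_insert, Finset.mem_singleton, not_or] at hc
    obtain ⟨hca, hcb⟩ := hc
    set E : I → ℕ := fun i => (Fintype.equivFin I i : ℕ) with hE
    have hEinj : Function.Injective E := fun x y h =>
      (Fintype.equivFin I).injective (Fin.ext h)
    have hElt : ∀ i, E i < n := fun i => (Fintype.equivFin I i).isLt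
    set gT : I → I → ℕ := fun o i => if i = o then n else E i with hgT
    have hgTle : ∀ o i, gT o i ≤ n := by
      intro o i
      show (if i = o then n else E i) ≤ n
      split_ifs
      · exact le_rfl
      · exact (hElt i).le
    have hginj : ∀ o : I, Function.Injective (gT o) := by
      intro o x y h
      have h' : (if x = o then n else E x) = (if y = o then n else E y) := h
      split_ifs at h' with h1 h2 h2
      · rw [h1, h2]
      · exact absurd h'.symm (hElt y).ne
      · exact absurd h' (hElt x).ne
      · exact hEinj h'
    set gA : I → ℕ := fun i => if i = b then n + 1 else gT c i with hgA
    have hgAinj : Function.Injective gA := by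
      intro x y h
      have h' : (if x = b then n + 1 else gT c x) = (if y = b then n + 1 else gT c y) := h
      split_ifs at h' with h1 h2 h2
      · rw [h1, h2]
      · exact absurd h'.symm (by have := hgTle c y; omega)
      · exact absurd h' (by have := hgTle c x; omega)
      · exact hginj c h'
    set P : I → LinearOrder I := fun i =>
      if h : i = a then LinearOrder.lift' gA hgAinj
      else if h' : i = c then LinearOrder.lift' (gT a) (hginj a)
      else LinearOrder.lift' (gT i) (hginj i) with hP
    set q : LinearOrder I := LinearOrder.lift' (gT c) (hginj c) with hq
    have hPa : P a = LinearOrder.lift' gA hgAinj := by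
      simp [hP]
    have hPb : P b = LinearOrder.lift' (gT b) (hginj b) := by
      simp only [hP]; rw [dif_neg hba, dif_neg (Ne.symm hcb)]
    have hPc : P c = LinearOrder.lift' (gT a) (hginj a) := by
      simp [hP, hca]
    -- values of gA
    have hgAb : gA b = n + 1 := if_pos rfl
    have hgAa : gA a = E a := by
      show (if a = b then n + 1 else gT c a) = E a
      rw [if_neg (Ne.symm hba)]
      show (if a = c then n else E a) = E a
      rw [if_neg (Ne.symm hca)]
    have hgAc : gA c = n := by
      show (if c = b then n + 1 else gT c c) = n
      rw [if_neg hcb]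
      show (if c = c then n else E c) = n
      rw [if_pos rfl]
    -- top computations
    have htopA : ∀ d, topOf (P a) d = b := by
      intro d
      rw [hPa]
      apply topOf_lift' _ _ _ _ hpos
      intro i
      rw [hgAb]
      show (if i = b then n + 1 else gT c i) ≤ n + 1
      split_ifs
      · exact le_rfl
      · exact (hgTle c i).trans (Nat.le_succ n)
    have htopT : ∀ (o : I) (d : I), topOf (LinearOrder.lift' (gT o) (hginj o)) d = o := by
      intro o d
      apply topOf_lift' _ _ _ _ hpos
      intro i
      have h1 : gT o o = n := if_pos rfl
      rw [h1]
      exact hgTle o i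
    -- truthful outcome for a is a
    have hfb : ∀ k : ℕ, (fun j => topOf (P j) j)^[k + 1] a = b := by
      intro k
      induction k with
      | zero =>
        show topOf (P a) a = b
        exact htopA a
      | succ k ih =>
        rw [Function.iterate_succ_apply', ih]
        show topOf (P b) b = b
        rw [hPb]; exact htopT b b
    have hout1 : firstStepMech P a = a := by
      unfold firstStepMech
      rw [if_neg]
      rintro ⟨k, -, hk⟩
      rw [hfb k] at hk
      exact hba hk
    -- misreport outcome for a is c
    set P' : I → LinearOrder I := Function.update P a q with hP'
    have hP'a : P' a = q := Function.update_self a q P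
    have hP'c : P' c = P c := Function.update_of_ne hca q P
    have hfa' : topOf (P' a) a = c := by rw [hP'a, hq]; exact htopT c a
    have hfc' : topOf (P' c) c = a := by rw [hP'c, hPc]; exact htopT a c
    have hout2 : firstStepMech P' a = c := by
      unfold firstStepMech
      rw [if_pos, hP'a, hq, htopT c a]
      refine ⟨1, Finset.mem_range.mpr (by omega), ?_⟩
      show (fun j => topOf (P' j) j) ((fun j => topOf (P' j) j) a) = a
      rw [show (fun j => topOf (P' j) j) a = c from hfa']
      exact hfc'
    -- contradiction with strategy-proofness
    have hcontr := hSP P (fun _ => Set.mem_univ _) a q (Set.mem_univ _)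
    rw [hout1] at hcontr
    rw [show Function.update P a q = P' from rfl, hout2] at hcontr
    apply hcontr
    rw [hPa]
    apply lt_lift'
    rw [hgAa, hgAc]
    exact hElt a
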